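/- Metric regularity from quadratic growth: let f:ℝⁿ→ℝ be convex-subdifferentiable near the minimizer set 𝔐 = argmin f (with min value f̲), and suppose the lower quadratic growth (𝔠₁/2)dist(x,𝔐)² ≤ f(x)−f̲ holds for x near 𝔐. Then for such x, dist(x, (∂f)^{-1}(0)) ≤ (2/𝔠₁) dist(0, ∂f(x)), i.e., the subdifferential is metrically regular at rate 2/𝔠₁ at every (x*,0) with x* ∈ 𝔐. -/

import Mathlib

open Metric

/-- Convex subdifferential `∂f(x) = {v : f(x) − f(y) ≤ ⟨v, x−y⟩ ∀y}`. -/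
def subdiff {n : ℕ} (f : EuclideanSpace ℝ (Fin n) → ℝ)
    (x : EuclideanSpace ℝ (Fin n)) : Set (EuclideanSpace ℝ (Fin n)) :=
  {v | ∀ y, f x - f y ≤ (inner ℝ v (x - y) : ℝ)}

/-! For `v ∈ ∂f(x)` and a minimiser `z`, `f x - f z ≤ ⟪v, x - z⟫ ≤ ‖v‖ dist(x, z)`; taking the
infimum over minimisers, `f x - f̲ ≤ ‖v‖ dist(x, 𝔐)`. Combined with quadratic growth this gives
`(c₁/2) dist(x, 𝔐) ≤ ‖v‖`, and `𝔐 ⊆ (∂f)⁻¹(0)` finishes the proof. -/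

lemma le_mul_infDist_of_forall_le_mul_dist {E : Type*} [PseudoMetricSpace E] {s : Set E}
    (hs : s.Nonempty) {x : E} {a c : ℝ} (hc : 0 ≤ c) (h : ∀ y ∈ s, a ≤ c * dist x y) :
    a ≤ c * infDist x s := by
  have := hs.to_subtype
  rw [infDist_eq_iInf, Real.mul_iInf_of_nonneg hc]
  exact le_ciInf fun y ↦ h y y.2

section Subdiff

variable {n : ℕ} {f : EuclideanSpace ℝ (Fin n) → ℝ}

lemma zero_mem_subdiff_of_forall_le {y : EuclideanSpace ℝ (Fin n)} (h : ∀ z, f y ≤ f z) :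
    0 ∈ subdiff f y := fun z ↦ by
  simpa only [inner_zero_left, sub_nonpos] using h z

lemma sub_le_norm_mul_dist_of_mem_subdiff {x v : EuclideanSpace ℝ (Fin n)}
    (hv : v ∈ subdiff f x) (y : EuclideanSpace ℝ (Fin n)) :
    f x - f y ≤ ‖v‖ * dist x y := by
  calc f x - f y ≤ inner ℝ v (x - y) := hv y
    _ ≤ ‖v‖ * ‖x - y‖ := real_inner_le_norm v (x - y)
    _ = ‖v‖ * dist x y := by rw [dist_eq_norm]

lemma sub_le_norm_mul_infDist_of_mem_subdiff {x v : EuclideanSpace ℝ (Fin n)}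
    {s : Set (EuclideanSpace ℝ (Fin n))} {m : ℝ} (hs : s.Nonempty) (hfs : ∀ z ∈ s, f z = m)
    (hv : v ∈ subdiff f x) :
    f x - m ≤ ‖v‖ * infDist x s :=
  le_mul_infDist_of_forall_le_mul_dist hs (norm_nonneg v) fun z hz ↦
    hfs z hz ▸ sub_le_norm_mul_dist_of_mem_subdiff hv z

lemma mul_infDist_le_infDist_zero_subdiff {x : EuclideanSpace ℝ (Fin n)}
    {s : Set (EuclideanSpace ℝ (Fin n))} {m c : ℝ} (hs : s.Nonempty) (hfs : ∀ z ∈ s, f z = m)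
    (hgrowth : (c / 2) * infDist x s ^ 2 ≤ f x - m) (hsub : (subdiff f x).Nonempty) :
    (c / 2) * infDist x s ≤ infDist 0 (subdiff f x) := by
  refine (le_infDist hsub).2 fun v hv ↦ ?_
  rw [dist_zero_left]
  have hquad : (c / 2) * infDist x s * infDist x s ≤ ‖v‖ * infDist x s := by
    rw [mul_assoc, ← sq]
    exact hgrowth.trans (sub_le_norm_mul_infDist_of_mem_subdiff hs hfs hv)
  rcases (infDist_nonneg (x := x) (s := s)).eq_or_lt with hd | hd
  · rw [← hd, mul_zero]
    exact norm_nonneg v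
  · exact le_of_mul_le_mul_right hquad hd

end Subdiff

theorem stmt18_general {n : ℕ} (f : EuclideanSpace ℝ (Fin n) → ℝ) (fmin r c1 : ℝ)
    (hc1 : 0 < c1)
    (hf_lb : ∀ x, fmin ≤ f x)
    (hMne : {x : EuclideanSpace ℝ (Fin n) | f x = fmin}.Nonempty)
    (hQG : ∀ x, infDist x {z : EuclideanSpace ℝ (Fin n) | f z = fmin} ≤ r →
      (c1 / 2) * (infDist x {z : EuclideanSpace ℝ (Fin n) | f z = fmin}) ^ 2
        ≤ f x - fmin)
    (hsub : ∀ x, infDist x {z : EuclideanSpace ℝ (Fin n) | f z = fmin} ≤ r →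
      (subdiff f x).Nonempty) :
    ∀ x, infDist x {z : EuclideanSpace ℝ (Fin n) | f z = fmin} ≤ r →
      infDist x {y : EuclideanSpace ℝ (Fin n) | (0 : EuclideanSpace ℝ (Fin n)) ∈ subdiff f y}
        ≤ (2 / c1) * infDist (0 : EuclideanSpace ℝ (Fin n)) (subdiff f x) := by
  intro x hx
  set M := {z : EuclideanSpace ℝ (Fin n) | f z = fmin}
  have hM_sub_zeros : M ⊆ {y | 0 ∈ subdiff f y} := fun z hz ↦
    zero_mem_subdiff_of_forall_le fun y ↦ (show f z = fmin from hz) ▸ hf_lb y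
  calc _ ≤ infDist x M := infDist_le_infDist_of_subset hM_sub_zeros hMne
    _ = (2 / c1) * ((c1 / 2) * infDist x M) := by field_simp
    _ ≤ _ := mul_le_mul_of_nonneg_left
        (mul_infDist_le_infDist_zero_subdiff hMne (fun _ hz ↦ hz) (hQG x hx) (hsub x hx))
        (by positivity)

/-- metric regularity from quadratic growth. If `f` attains its minimum
`f̲` on `𝔐 = {x | f x = f̲} ≠ ∅`, is subdifferentiable near `𝔐`, and satisfies the
lower quadratic growth `(𝔠₁/2)dist(x,𝔐)² ≤ f(x)−f̲` for `dist(x,𝔐) ≤ r`, then for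
such `x`, `dist(x, (∂f)⁻¹(0)) ≤ (2/𝔠₁) dist(0, ∂f(x))`. -/
theorem stmt18 {n : ℕ} (f : EuclideanSpace ℝ (Fin n) → ℝ) (fmin r c1 : ℝ)
    (hr : 0 < r) (hc1 : 0 < c1)
    (hf_lb : ∀ x, fmin ≤ f x)
    (hMne : {x : EuclideanSpace ℝ (Fin n) | f x = fmin}.Nonempty)
    (hQG : ∀ x, infDist x {z : EuclideanSpace ℝ (Fin n) | f z = fmin} ≤ r →
      (c1 / 2) * (infDist x {z : EuclideanSpace ℝ (Fin n) | f z = fmin}) ^ 2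
        ≤ f x - fmin)
    (hsub : ∀ x, infDist x {z : EuclideanSpace ℝ (Fin n) | f z = fmin} ≤ r →
      (subdiff f x).Nonempty) :
    ∀ x, infDist x {z : EuclideanSpace ℝ (Fin n) | f z = fmin} ≤ r →
      infDist x {y : EuclideanSpace ℝ (Fin n) | (0 : EuclideanSpace ℝ (Fin n)) ∈ subdiff f y}
        ≤ (2 / c1) * infDist (0 : EuclideanSpace ℝ (Fin n)) (subdiff f x) :=
  stmt18_general f fmin r c1 hc1 hf_lb hMne hQG hsub
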